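/- Let K_4 be the complete graph on the vertex set {1,2,3,4} and K a field. Then the cut ideal I_{K_4} is the principal ideal generated by the degree-4 binomial q_{1|234} q_{2|134} q_{3|124} q_{4|123} − q_{∅|1234} q_{12|34} q_{13|24} q_{14|23}. -/

import Mathlib

open scoped Classical

noncomputable section

namespace CutPaper

open MvPolynomial

/-- An edge `e` is cut by the partition `A | Aᶜ` if it has exactly one endpoint in `A`. -/
def IsCutEdge {V : Type} (A : Set V) (e : Sym2 V) : Prop :=
  ∃ u v : V, e = s(u, v) ∧ u ∈ A ∧ v ∉ A

/-- The cut set of `A`: all edges of `G` with exactly one endpoint in `A`. -/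
def cutSet {V : Type} (G : SimpleGraph V) (A : Set V) : Set (Sym2 V) :=
  {e ∈ G.edgeSet | IsCutEdge A e}

lemma isCutEdge_compl {V : Type} (A : Set V) (e : Sym2 V) :
    IsCutEdge Aᶜ e ↔ IsCutEdge A e := by
  constructor <;> rintro ⟨u, v, rfl, hu, hv⟩
  · exact ⟨v, u, Sym2.eq_swap, by simpa using hv, hu⟩
  · exact ⟨v, u, Sym2.eq_swap, hv, not_not_intro hu⟩

/-- Two subsets determine the same unordered partition `A | Aᶜ` of `V`
iff they are equal or complementary. -/
def partitionSetoid (V : Type) : Setoid (Set V) where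
  r A B := B = A ∨ B = Aᶜ
  iseqv := by
    refine ⟨fun A => Or.inl rfl, @fun A B h => ?_, @fun A B C h1 h2 => ?_⟩
    · rcases h with rfl | rfl
      · exact Or.inl rfl
      · exact Or.inr (compl_compl A).symm
    · rcases h1 with rfl | rfl <;> rcases h2 with rfl | rfl
      · exact Or.inl rfl
      · exact Or.inr rfl
      · exact Or.inr rfl
      · exact Or.inl (compl_compl A)

/-- The unordered partitions `A | Aᶜ` of `V`, indexing the variables of `S_G`. -/
abbrev Partition (V : Type) := Quotient (partitionSetoid V)

variable (K : Type) [CommRing K]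

/-- The variable `q_{A|Aᶜ}` of the polynomial ring `S_G`. -/
def qPart {V : Type} (A : Set V) : MvPolynomial (Partition V) K :=
  X (Quotient.mk (partitionSetoid V) A)

/-- The monomial `u_A = ∏_{e ∈ Cut(A)} s_e · ∏_{e ∈ E \ Cut(A)} t_e`;
the variable `s_e` is `X (true, e)` and `t_e` is `X (false, e)`. -/
def cutMonomial {V : Type} [Finite V] (G : SimpleGraph V) (A : Set V) :
    MvPolynomial (Bool × Sym2 V) K :=
  ∏ e ∈ (Set.toFinite G.edgeSet).toFinset,
    if IsCutEdge A e then X (true, e) else X (false, e)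

lemma cutMonomial_compl {V : Type} [Finite V] (G : SimpleGraph V) (A : Set V) :
    cutMonomial K G Aᶜ = cutMonomial K G A := by
  unfold cutMonomial
  refine Finset.prod_congr rfl fun e _ => ?_
  by_cases h : IsCutEdge A e
  · rw [if_pos ((isCutEdge_compl A e).mpr h), if_pos h]
  · rw [if_neg fun hc => h ((isCutEdge_compl A e).mp hc), if_neg h]

/-- The `K`-algebra homomorphism `φ_G : S_G → R_G`, `q_{A|Aᶜ} ↦ u_A`. -/
def phi {V : Type} [Finite V] (G : SimpleGraph V) :
    MvPolynomial (Partition V) K →ₐ[K] MvPolynomial (Bool × Sym2 V) K :=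
  aeval fun p : Partition V =>
    Quotient.lift (cutMonomial K G)
      (fun A B hAB => by
        have h : B = A ∨ B = Aᶜ := hAB
        rcases h with rfl | rfl
        · rfl
        · exact (cutMonomial_compl K G A).symm) p

/-- The cut ideal `I_G = ker φ_G`. -/
def cutIdeal {V : Type} [Finite V] (G : SimpleGraph V) :
    Ideal (MvPolynomial (Partition V) K) :=
  RingHom.ker (phi K G)

/-- The cut algebra `K[G]`, i.e. the image of `φ_G`: the `K`-subalgebra of `R_G`
generated by the monomials `u_A`. -/
def cutAlgebra {V : Type} [Finite V] (G : SimpleGraph V) :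
    Subalgebra K (MvPolynomial (Bool × Sym2 V) K) :=
  Algebra.adjoin K {m | ∃ A : Set V, m = cutMonomial K G A}

/-- The generator `u_A` of the cut algebra, as an element of the cut algebra. -/
def uGen {V : Type} [Finite V] (G : SimpleGraph V) (A : Set V) : ↥(cutAlgebra K G) :=
  ⟨cutMonomial K G A, Algebra.subset_adjoin ⟨A, rfl⟩⟩

/-- An element of `S_G/I` is homogeneous of degree `d` if it is the class of a homogeneous
polynomial of degree `d`. -/
def QuotHomogeneous {σ : Type} (I : Ideal (MvPolynomial σ K)) (d : ℕ)
    (x : MvPolynomial σ K ⧸ I) : Prop :=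
  ∃ f : MvPolynomial σ K, f.IsHomogeneous d ∧ Ideal.Quotient.mk I f = x

/-- The cut algebra of `H` is an algebra retract of the cut algebra of `G`:
there are homogeneous `K`-algebra homomorphisms `ι : K[H] → K[G]` (injective) and
`π : K[G] → K[H]` with `π ∘ ι = id`. -/
def CutAlgebraRetract {V W : Type} [Finite V] [Finite W]
    (H : SimpleGraph W) (G : SimpleGraph V) : Prop :=
  ∃ (ι : (MvPolynomial (Partition W) K ⧸ cutIdeal K H) →ₐ[K]
      (MvPolynomial (Partition V) K ⧸ cutIdeal K G))
    (π : (MvPolynomial (Partition V) K ⧸ cutIdeal K G) →ₐ[K]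
      (MvPolynomial (Partition W) K ⧸ cutIdeal K H)),
    Function.Injective ι ∧
    (∀ d x, QuotHomogeneous K (cutIdeal K H) d x →
      ∃ d', QuotHomogeneous K (cutIdeal K G) d' (ι x)) ∧
    (∀ d x, QuotHomogeneous K (cutIdeal K G) d x →
      ∃ d', QuotHomogeneous K (cutIdeal K H) d' (π x)) ∧
    π.comp ι = AlgHom.id K _

/-- The graph obtained from `G` by contracting the edge `{u, v}`: the vertex `u` is removed
and merged into `v`. -/
def contractEdge {V : Type} (G : SimpleGraph V) (u v : V) :
    SimpleGraph {x : V // x ≠ u} where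
  Adj a b := a ≠ b ∧
    (G.Adj a b ∨ ((a : V) = v ∧ G.Adj u b) ∨ ((b : V) = v ∧ G.Adj a u))
  symm := by
    constructor
    rintro a b ⟨hne, h | ⟨ha, h⟩ | ⟨hb, h⟩⟩
    · exact ⟨hne.symm, Or.inl h.symm⟩
    · exact ⟨hne.symm, Or.inr (Or.inr ⟨ha, h.symm⟩)⟩
    · exact ⟨hne.symm, Or.inr (Or.inl ⟨hb, h.symm⟩)⟩
  loopless := ⟨fun a h => h.1 rfl⟩

/-- The induced subgraph `G_W` is a neighborhood-minor of `G`: `W` and `W' = Wᶜ` are nonempty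
and there is a vertex `v ∈ W` with `W ∩ N_G(W') ⊆ N_{G_W}[v]`. -/
def IsNeighborhoodMinor {V : Type} (G : SimpleGraph V) (W : Set V) : Prop :=
  W.Nonempty ∧ Wᶜ.Nonempty ∧
    ∃ v ∈ W, ∀ x ∈ W, (∃ y ∈ Wᶜ, G.Adj y x) → x = v ∨ G.Adj v x

/-- The cut vector `δ_A ∈ {0,1}^E` of the partition `A | Aᶜ`. -/
def cutVector {V : Type} (G : SimpleGraph V) (A : Set V) : ↥G.edgeSet → ℝ :=
  fun e => if IsCutEdge A (e : Sym2 V) then 1 else 0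

/-- The cut polytope `Cut^□(G) ⊆ ℝ^E`: the convex hull of the cut vectors. -/
def cutPolytope {V : Type} (G : SimpleGraph V) : Set (↥G.edgeSet → ℝ) :=
  convexHull ℝ {x | ∃ A : Set V, x = cutVector G A}

/-- `F` is a face of `P`: either a trivial face (`P` or `∅`), or the intersection of `P`
with a supporting hyperplane. -/
def IsFace {α : Type} (P F : Set (α → ℝ)) : Prop :=
  F = P ∨ F = ∅ ∨
    ∃ (φ : (α → ℝ) →ₗ[ℝ] ℝ) (c : ℝ), φ ≠ 0 ∧
      (∀ x ∈ P, φ x ≤ c) ∧ F = P ∩ {x | φ x = c}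

/-- `P` and `Q` are affinely isomorphic: there is a bijective map from `P` onto `Q`
extending to an affine map. -/
def AffinelyIsomorphic {α β : Type} (P : Set (α → ℝ)) (Q : Set (β → ℝ)) : Prop :=
  ∃ f : (α → ℝ) →ᵃ[ℝ] (β → ℝ), Set.InjOn f P ∧ f '' P = Q

/-- The monomial `z · ∏_{e ∈ Cut(A)} y_e` of the polytopal algebra of the cut polytope;
the variable `z` is `X none` and `y_e` is `X (some e)`. -/
def polytopeMonomial {V : Type} [Finite V] (G : SimpleGraph V) (A : Set V) :
    MvPolynomial (Option (Sym2 V)) K :=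
  X none * ∏ e ∈ (Set.toFinite (cutSet G A)).toFinset, X (some e)

/-- The polytopal algebra `K[Cut^□(G)]`: the subalgebra of `K[y_e (e ∈ E), z]` generated by
the monomials `z · y^{δ_A}` attached to the lattice points (= cut vectors) of `Cut^□(G)`. -/
def polytopalAlgebra {V : Type} [Finite V] (G : SimpleGraph V) :
    Subalgebra K (MvPolynomial (Option (Sym2 V)) K) :=
  Algebra.adjoin K {m | ∃ A : Set V, m = polytopeMonomial K G A}

/-- `G'` is a combinatorial retract of `G`: it is obtained from `G` by a finite sequence of
edge contractions and neighborhood-minors. -/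
inductive CombinatorialRetract : ∀ {V W : Type}, SimpleGraph V → SimpleGraph W → Prop
  | refl {V : Type} (G : SimpleGraph V) : CombinatorialRetract G G
  | contract {V W : Type} (G : SimpleGraph V) (u v : V) (huv : G.Adj u v)
      (G' : SimpleGraph W) (h : CombinatorialRetract (contractEdge G u v) G') :
      CombinatorialRetract G G'
  | nbhdMinor {V W : Type} (G : SimpleGraph V) (S : Set V)
      (hS : IsNeighborhoodMinor G S) (G' : SimpleGraph W)
      (h : CombinatorialRetract (SimpleGraph.induce S G) G') :
      CombinatorialRetract G G'

/-! The map `φ_G` sends monomials to monomials, so its kernel is spanned by the binomials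
`x^a - x^b` with `φ_G(x^a) = φ_G(x^b)`. For `K₄`, the six `s`-exponents and one `t`-exponent of
`φ(x^a)` are seven linear forms in the eight exponents of `a` whose common kernel over `ℤ` is
spanned by `v⁺ - v⁻`, where `v⁺` (resp. `v⁻`) is the indicator of the partitions with sides of
odd (resp. even) size. Hence `a = c + k v⁻` and `b = c + k v⁺` up to order, and
`x^a - x^b = x^c ((x^{v⁻})^k - (x^{v⁺})^k)` is a multiple of `x^{v⁺} - x^{v⁻}`. -/

theorem ker_le_of_binomial_mem {σ τ R : Type*} [CommRing R]
    (f : MvPolynomial σ R →ₐ[R] MvPolynomial τ R) (W : (σ →₀ ℕ) → (τ →₀ ℕ))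
    (hf : ∀ a c, f (monomial a c) = monomial (W a) c) (I : Ideal (MvPolynomial σ R))
    (hI : ∀ a b, W a = W b → monomial a 1 - monomial b 1 ∈ I) :
    RingHom.ker f ≤ I := by
  -- `ρ` moves every `x^a` to a fixed representative of the fibre of `W a`, and factors through `f`.
  let g := Function.invFun W
  let ρ : MvPolynomial σ R → MvPolynomial σ R := fun p => AddMonoidAlgebra.mapDomain g (f p)
  have hρ : ∀ p, p - ρ p ∈ I := by
    intro p
    induction p using MvPolynomial.induction_on' with
    | monomial a c =>
      have hW : W (g (W a)) = W a := Function.invFun_eq ⟨a, rfl⟩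
      have hρa : ρ (monomial a c) = monomial (g (W a)) c := by
        simp only [ρ, hf]
        exact AddMonoidAlgebra.mapDomain_single
      rw [hρa, ← mul_one c, ← C_mul_monomial, ← C_mul_monomial, ← mul_sub]
      exact I.mul_mem_left _ (hI _ _ hW.symm)
    | add p q hp hq =>
      have hρpq : ρ (p + q) = ρ p + ρ q := by
        simp only [ρ, map_add]
        exact AddMonoidAlgebra.mapDomain_add _ _ _
      rw [hρpq, add_sub_add_comm]
      exact I.add_mem hp hq
  intro p hp
  have hρp : ρ p = 0 := by
    simp only [ρ, RingHom.mem_ker.mp hp]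
    exact AddMonoidAlgebra.mapDomain_zero _
  simpa [hρp] using hρ p

theorem aeval_monomial_of_monomial {σ τ R : Type*} [CommRing R] (w : σ → τ →₀ ℕ)
    (a : σ →₀ ℕ) (c : R) :
    aeval (fun i => monomial (w i) (1 : R)) (monomial a c) =
      monomial (a.sum fun i n => n • w i) c := by
  simp only [aeval_monomial, monomial_pow, one_pow, monomial_finsupp_sum_index, algebraMap_eq]

theorem monomial_sub_monomial_dvd {σ R : Type*} [CommRing R] (c u v : σ →₀ ℕ) (k : ℕ) :
    monomial u (1 : R) - monomial v 1 ∣ monomial (c + k • u) 1 - monomial (c + k • v) 1 := by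
  have h : ∀ w : σ →₀ ℕ, monomial (c + k • w) (1 : R) = monomial c 1 * monomial w 1 ^ k := by
    intro w
    rw [monomial_pow, monomial_mul, one_pow, mul_one]
  rw [h, h, ← mul_sub]
  exact (sub_dvd_pow_sub_pow _ _ _).mul_left _

theorem isCutEdge_mk {V : Type} (A : Set V) (u v : V) :
    IsCutEdge A s(u, v) ↔ (u ∈ A ↔ v ∉ A) := by
  constructor
  · rintro ⟨x, y, hxy, hx, hy⟩
    rcases Sym2.eq_iff.mp hxy with ⟨rfl, rfl⟩ | ⟨rfl, rfl⟩ <;> tauto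
  · intro h
    by_cases hu : u ∈ A
    · exact ⟨u, v, rfl, hu, h.mp hu⟩
    · exact ⟨v, u, Sym2.eq_swap, not_not.mp (mt h.mpr hu), hu⟩

section CutExponent

variable {V : Type} [Finite V] (G : SimpleGraph V)

def cutExponent (A : Set V) : Bool × Sym2 V →₀ ℕ :=
  ∑ e ∈ (Set.toFinite G.edgeSet).toFinset,
    Finsupp.single (if IsCutEdge A e then (true, e) else (false, e)) 1

theorem cutExponent_compl (A : Set V) : cutExponent G Aᶜ = cutExponent G A := by
  simp only [cutExponent, isCutEdge_compl]

theorem cutExponent_apply (A : Set V) (b : Bool) (e : Sym2 V) :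
    cutExponent G A (b, e) = if e ∈ G.edgeSet ∧ (IsCutEdge A e ↔ b = true) then 1 else 0 := by
  have h : ∀ e' : Sym2 V,
      Finsupp.single (if IsCutEdge A e' then (true, e') else (false, e')) 1 (b, e) =
        if e' = e then (if IsCutEdge A e ↔ b = true then 1 else 0) else 0 := by
    intro e'
    by_cases he : e' = e
    · subst he
      split_ifs <;> simp_all
    · split_ifs <;> simp [Ne.symm he]
  simp only [cutExponent, Finsupp.finsetSum_apply, h, Finset.sum_ite_eq', Set.Finite.mem_toFinset,
    ite_and]

theorem cutMonomial_eq_monomial (A : Set V) :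
    cutMonomial K G A = monomial (cutExponent G A) 1 := by
  rw [cutExponent, monomial_sum_one]
  refine Finset.prod_congr rfl fun e _ => ?_
  split_ifs <;> rfl

def partitionExponent : Partition V → Bool × Sym2 V →₀ ℕ :=
  Quotient.lift (cutExponent G) fun A B (hAB : B = A ∨ B = Aᶜ) => by
    rcases hAB with rfl | rfl
    · rfl
    · exact (cutExponent_compl G A).symm

theorem partitionExponent_mk (A : Set V) :
    partitionExponent G (Quotient.mk _ A) = cutExponent G A := rfl

theorem phi_eq_aeval : phi K G = aeval fun p => monomial (partitionExponent G p) 1 := by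
  refine MvPolynomial.algHom_ext fun p => ?_
  induction p using Quotient.inductionOn with
  | h A =>
    simp only [phi, aeval_X]
    exact cutMonomial_eq_monomial K G A

def phiExponent (a : Partition V →₀ ℕ) : Bool × Sym2 V →₀ ℕ :=
  a.sum fun p n => n • partitionExponent G p

theorem phi_monomial (a : Partition V →₀ ℕ) (c : K) :
    phi K G (monomial a c) = monomial (phiExponent G a) c := by
  rw [phi_eq_aeval, aeval_monomial_of_monomial, phiExponent]

end CutExponent

section CompleteGraphFour

def partitionRep : Fin 8 → Finset (Fin 4) := ![∅, {0}, {1}, {2}, {3}, {0, 1}, {0, 2}, {0, 3}]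

theorem eq_of_partitionRep_eq_or_eq_compl :
    ∀ i j : Fin 8, partitionRep j = partitionRep i ∨ partitionRep j = (partitionRep i)ᶜ → i = j := by
  decide

theorem exists_partitionRep_eq_or_eq_compl :
    ∀ s : Finset (Fin 4), ∃ i, partitionRep i = s ∨ partitionRep i = sᶜ := by
  decide

def fin8EquivPartition : Fin 8 ≃ Partition (Fin 4) :=
  Equiv.ofBijective (fun i => Quotient.mk _ (partitionRep i : Set (Fin 4))) <| by
    constructor
    · intro i j hij
      refine eq_of_partitionRep_eq_or_eq_compl i j ?_
      rw [← Finset.coe_inj, ← Finset.coe_inj, Finset.coe_compl]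
      exact Quotient.exact hij
    · refine Quotient.ind fun A => ?_
      obtain ⟨i, hi⟩ := exists_partitionRep_eq_or_eq_compl A.toFinset
      refine ⟨i, Quotient.sound ?_⟩
      rw [← Finset.coe_inj, ← Finset.coe_inj, Finset.coe_compl, Set.coe_toFinset] at hi
      rcases hi with hi | hi
      · exact Or.inl hi.symm
      · exact Or.inr (by rw [hi, compl_compl])

theorem fin8EquivPartition_apply (i : Fin 8) :
    fin8EquivPartition i = Quotient.mk _ (partitionRep i : Set (Fin 4)) := rfl

theorem ext_fin8EquivPartition {a b : Partition (Fin 4) →₀ ℕ}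
    (h : ∀ i, a (fin8EquivPartition i) = b (fin8EquivPartition i)) : a = b :=
  Finsupp.ext fun p => by simpa using h (fin8EquivPartition.symm p)

theorem phiExponent_top_apply (a : Partition (Fin 4) →₀ ℕ) (b : Bool) (u v : Fin 4) :
    phiExponent ⊤ a (b, s(u, v)) = ∑ i : Fin 8, a (fin8EquivPartition i) *
      if u ≠ v ∧ ((u ∈ partitionRep i ↔ v ∉ partitionRep i) ↔ b = true) then 1 else 0 := by
  rw [phiExponent, Finsupp.sum_fintype _ _ (by simp), Finsupp.finsetSum_apply,
    ← Equiv.sum_comp fin8EquivPartition]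
  refine Finset.sum_congr rfl fun i _ => ?_
  simp [fin8EquivPartition_apply, partitionExponent_mk, cutExponent_apply, isCutEdge_mk]

def oddExponent : Partition (Fin 4) →₀ ℕ :=
  ∑ i ∈ {1, 2, 3, 4}, Finsupp.single (fin8EquivPartition i) 1

def evenExponent : Partition (Fin 4) →₀ ℕ :=
  ∑ i ∈ {0, 5, 6, 7}, Finsupp.single (fin8EquivPartition i) 1

theorem oddExponent_apply (i : Fin 8) :
    oddExponent (fin8EquivPartition i) = if i ∈ ({1, 2, 3, 4} : Finset (Fin 8)) then 1 else 0 := by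
  simp only [oddExponent, Finsupp.finsetSum_apply, Finsupp.single_apply,
    fin8EquivPartition.injective.eq_iff, Finset.sum_ite_eq']

theorem evenExponent_apply (i : Fin 8) :
    evenExponent (fin8EquivPartition i) = if i ∈ ({0, 5, 6, 7} : Finset (Fin 8)) then 1 else 0 := by
  simp only [evenExponent, Finsupp.finsetSum_apply, Finsupp.single_apply,
    fin8EquivPartition.injective.eq_iff, Finset.sum_ite_eq']

theorem phiExponent_oddExponent : phiExponent ⊤ oddExponent = phiExponent ⊤ evenExponent := by
  ext ⟨b, e⟩
  induction e using Sym2.ind with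
  | _ u v =>
    simp only [phiExponent_top_apply, oddExponent_apply, evenExponent_apply]
    revert b u v
    decide

theorem exists_eq_add_nsmul_of_phiExponent_eq {a b : Partition (Fin 4) →₀ ℕ}
    (h : phiExponent ⊤ a = phiExponent ⊤ b) :
    ∃ (c : Partition (Fin 4) →₀ ℕ) (k : ℕ),
      (a = c + k • evenExponent ∧ b = c + k • oddExponent) ∨
        (a = c + k • oddExponent ∧ b = c + k • evenExponent) := by
  wlog hle : a (fin8EquivPartition 1) ≤ b (fin8EquivPartition 1) generalizing a b
  · obtain ⟨c, k, hck⟩ := this h.symm (le_of_not_ge hle)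
    exact ⟨c, k, hck.symm.imp And.symm And.symm⟩
  have h01 := DFunLike.congr_fun h (true, s(0, 1))
  have h02 := DFunLike.congr_fun h (true, s(0, 2))
  have h03 := DFunLike.congr_fun h (true, s(0, 3))
  have h12 := DFunLike.congr_fun h (true, s(1, 2))
  have h13 := DFunLike.congr_fun h (true, s(1, 3))
  have h23 := DFunLike.congr_fun h (true, s(2, 3))
  have hdeg := DFunLike.congr_fun h (false, s(0, 1))
  simp only [phiExponent_top_apply, Fin.sum_univ_eight, partitionRep] at h01 h02 h03 h12 h13 h23 hdeg
  simp at h01 h02 h03 h12 h13 h23 hdeg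
  refine ⟨a ⊓ b, b (fin8EquivPartition 1) - a (fin8EquivPartition 1), Or.inl ⟨?_, ?_⟩⟩ <;>
    refine ext_fin8EquivPartition fun i => ?_ <;>
    fin_cases i <;> simp [oddExponent_apply, evenExponent_apply] <;> omega

theorem monomial_sub_monomial_mem_span_of_phiExponent_eq {a b : Partition (Fin 4) →₀ ℕ}
    (h : phiExponent ⊤ a = phiExponent ⊤ b) :
    monomial a (1 : K) - monomial b 1 ∈
      Ideal.span {monomial oddExponent 1 - monomial evenExponent 1} := by
  rw [Ideal.mem_span_singleton]
  obtain ⟨c, k, ⟨rfl, rfl⟩ | ⟨rfl, rfl⟩⟩ := exists_eq_add_nsmul_of_phiExponent_eq h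
  · exact dvd_sub_comm.mp (monomial_sub_monomial_dvd c oddExponent evenExponent k)
  · exact monomial_sub_monomial_dvd c oddExponent evenExponent k

theorem qPart_binomial_eq :
    qPart K ({0} : Set (Fin 4)) * qPart K ({1} : Set (Fin 4)) *
          qPart K ({2} : Set (Fin 4)) * qPart K ({3} : Set (Fin 4)) -
        qPart K (∅ : Set (Fin 4)) * qPart K ({0, 1} : Set (Fin 4)) *
          qPart K ({0, 2} : Set (Fin 4)) * qPart K ({0, 3} : Set (Fin 4)) =
      monomial oddExponent 1 - monomial evenExponent 1 := by
  simp [qPart, oddExponent, evenExponent, X, monomial_mul, Finset.sum_insert,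
    fin8EquivPartition_apply, partitionRep, add_assoc]

end CompleteGraphFour

theorem stmt12 (K : Type) [Field K] :
    cutIdeal K (⊤ : SimpleGraph (Fin 4)) = Ideal.span
      { qPart K ({0} : Set (Fin 4)) * qPart K ({1} : Set (Fin 4)) *
          qPart K ({2} : Set (Fin 4)) * qPart K ({3} : Set (Fin 4)) -
        qPart K (∅ : Set (Fin 4)) * qPart K ({0, 1} : Set (Fin 4)) *
          qPart K ({0, 2} : Set (Fin 4)) * qPart K ({0, 3} : Set (Fin 4)) } := by
  rw [qPart_binomial_eq]
  refine le_antisymm ?_ ?_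
  · exact ker_le_of_binomial_mem _ _ (phi_monomial K ⊤) _ fun a b h =>
      monomial_sub_monomial_mem_span_of_phiExponent_eq K h
  · rw [Ideal.span_le, Set.singleton_subset_iff, SetLike.mem_coe, cutIdeal, RingHom.mem_ker,
      map_sub, phi_monomial, phi_monomial, phiExponent_oddExponent, sub_self]

end CutPaper
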